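/- Let ε, a, b, ρ, E > 0 and suppose ℳ_ε(v) = a e^{−b|v|²}/(1+εa e^{−b|v|²}) satisfies ∫_{ℝ³} ℳ_ε dv = ρ and ∫ |v|² ℳ_ε dv = 3ρE, and assume additionally εa ≤ 2^{5/2}/3. Then 3b/5 ≤ 1/(2E) ≤ 4b/3 and (3/5)^{5/2} a ≤ ρ/(2πE)^{3/2} ≤ (4/3)^{3/2} a. -/

import Mathlib

open MeasureTheory Real

noncomputable section

abbrev E3 := EuclideanSpace ℝ (Fin 3)

/-- Maxwellian `M(v) = a e^{-b|v|²}`. -/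
def Mw (a b : ℝ) (v : E3) : ℝ := a * exp (-b * ‖v‖ ^ 2)

/-- Fermi–Dirac statistics `ℳ_ε = M/(1+εM)`. -/
def FD (ε a b : ℝ) (v : E3) : ℝ := Mw a b v / (1 + ε * Mw a b v)

/-! Integrating `M / (1 + εM) ≤ M` and the tangent-line (Jensen) inequality for the convex function
`u ↦ 1 / (1 + u)`, in the form `(∫ gM)² / (∫ gM + ε ∫ gM²) ≤ ∫ gM / (1 + εM)`, against the
weights `g = 1` and `g = |v|²` squeezes the mass and energy of `ℳ_ε` between those of `M`, namely
`a (π/b)^{3/2}` and `3/(2b)` times it, and the same quantities divided by `1 + 2^{-3/2} εa`,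
resp. `1 + 2^{-5/2} εa`: the Gaussian `M² = a² e^{-2b|v|²}` has relative mass `2^{-3/2} a` and
relative energy `2^{-5/2} a`. Comparing mass with energy gives the two-sided estimates for
`1/(2E)` and `ρ/(2πE)^{3/2}`, and `εa ≤ 2^{5/2}/3` bounds the correction factors by `5/3` and
`4/3`. -/

section Gaussian

open Set

theorem integral_Ioi_pow_mul_sq_mul_exp_neg_mul_sq {β : ℝ} (hβ : 0 < β) (m : ℕ) :
    ∫ y in Ioi (0 : ℝ), y ^ m * (y ^ 2 * exp (-β * y ^ 2))
      = (m + 1) / (2 * β) * ∫ y in Ioi (0 : ℝ), y ^ m * exp (-β * y ^ 2) := by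
  have gamma (q : ℝ) (hq : -1 < q) : ∫ y in Ioi (0 : ℝ), y ^ q * exp (-β * y ^ 2)
      = β ^ (-(q + 1) / 2) * (1 / 2) * Gamma ((q + 1) / 2) := by
    simpa using integral_rpow_mul_exp_neg_mul_rpow two_pos hq hβ
  have h₁ : ∫ y in Ioi (0 : ℝ), y ^ m * (y ^ 2 * exp (-β * y ^ 2))
      = ∫ y in Ioi (0 : ℝ), y ^ ((m + 2 : ℕ) : ℝ) * exp (-β * y ^ 2) := by
    simp_rw [rpow_natCast, pow_add, mul_assoc]
  have h₂ : ∫ y in Ioi (0 : ℝ), y ^ m * exp (-β * y ^ 2)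
      = ∫ y in Ioi (0 : ℝ), y ^ (m : ℝ) * exp (-β * y ^ 2) := by
    simp_rw [rpow_natCast]
  rw [h₁, h₂, gamma _ (neg_one_lt_zero.trans_le (Nat.cast_nonneg _)),
    gamma _ (neg_one_lt_zero.trans_le (Nat.cast_nonneg _))]
  push_cast
  rw [show ((m : ℝ) + 2 + 1) / 2 = (m + 1) / 2 + 1 by ring, Gamma_add_one (by positivity),
    show -((m : ℝ) + 2 + 1) / 2 = -1 + -((m : ℝ) + 1) / 2 by ring, rpow_add hβ, rpow_neg_one]
  field_simp

variable {V : Type*} [NormedAddCommGroup V] [InnerProductSpace ℝ V] [FiniteDimensional ℝ V]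
  [MeasurableSpace V] [BorelSpace V] [Nontrivial V] (μ : Measure V) [μ.IsAddHaarMeasure]

theorem integrable_norm_pow_mul_exp_neg_mul_sq_norm {β : ℝ} (hβ : 0 < β) (k : ℕ) :
    Integrable (fun v : V => ‖v‖ ^ k * exp (-β * ‖v‖ ^ 2)) μ := by
  rw [integrable_fun_norm_addHaar μ (f := fun y => y ^ k * exp (-β * y ^ 2))]
  refine (integrableOn_rpow_mul_exp_neg_mul_sq hβ
    (s := ((Module.finrank ℝ V - 1 + k : ℕ) : ℝ))
    (neg_one_lt_zero.trans_le (Nat.cast_nonneg _))).congr_fun (fun y _ => ?_) measurableSet_Ioi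
  simp only [rpow_natCast, pow_add, smul_eq_mul, mul_assoc]

theorem integral_norm_sq_mul_exp_neg_mul_sq_norm {β : ℝ} (hβ : 0 < β) :
    ∫ v, ‖v‖ ^ 2 * exp (-β * ‖v‖ ^ 2) ∂μ
      = Module.finrank ℝ V / (2 * β) * ∫ v, exp (-β * ‖v‖ ^ 2) ∂μ := by
  rw [integral_fun_norm_addHaar μ (fun y => y ^ 2 * exp (-β * y ^ 2)),
    integral_fun_norm_addHaar μ (fun y => exp (-β * y ^ 2))]
  simp only [smul_eq_mul]
  rw [integral_Ioi_pow_mul_sq_mul_exp_neg_mul_sq hβ]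
  have : ((Module.finrank ℝ V - 1 : ℕ) : ℝ) + 1 = Module.finrank ℝ V := by
    have := Module.finrank_pos (R := ℝ) (M := V)
    norm_cast; omega
  rw [this]; ring

end Gaussian

-- the tangent line at `w` of the convex function `u ↦ 1 / (1 + u)`
theorem tangent_le_one_div_one_add {u w : ℝ} (hu : -1 < u) (hw : -1 < w) :
    (1 + 2 * w - u) / (1 + w) ^ 2 ≤ 1 / (1 + u) := by
  have hu' : 0 < 1 + u := by linarith
  have hw' : 0 < 1 + w := by linarith
  have key : 1 / (1 + u) - (1 + 2 * w - u) / (1 + w) ^ 2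
      = (u - w) ^ 2 / ((1 + u) * (1 + w) ^ 2) := by
    field_simp
    ring
  have : 0 ≤ (u - w) ^ 2 / ((1 + u) * (1 + w) ^ 2) := by positivity
  linarith

section WeightedMoments

variable {α : Type*} [MeasurableSpace α] {μ : Measure α} {f g : α → ℝ} {ε : ℝ}

theorem integral_mul_div_one_add_mul_le (hε : 0 ≤ ε) (hf : ∀ x, 0 ≤ f x) (hg : ∀ x, 0 ≤ g x)
    (hgf : Integrable (fun x => g x * f x) μ) :
    ∫ x, g x * (f x / (1 + ε * f x)) ∂μ ≤ ∫ x, g x * f x ∂μ := by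
  have hden (x : α) : 1 ≤ 1 + ε * f x := le_add_of_nonneg_right (mul_nonneg hε (hf x))
  refine integral_mono_of_nonneg (ae_of_all _ fun x => ?_) hgf (ae_of_all _ fun x => ?_)
  · exact mul_nonneg (hg x) (div_nonneg (hf x) (zero_le_one.trans (hden x)))
  · exact mul_le_mul_of_nonneg_left (div_le_self (hf x) (hden x)) (hg x)

theorem sq_integral_div_le_integral_mul_div_one_add (hε : 0 ≤ ε) (hf : ∀ x, 0 ≤ f x)
    (hg : ∀ x, 0 ≤ g x) (hgf : Integrable (fun x => g x * f x) μ)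
    (hgf₂ : Integrable (fun x => g x * f x ^ 2) μ)
    (hgF : Integrable (fun x => g x * (f x / (1 + ε * f x))) μ) :
    (∫ x, g x * f x ∂μ) ^ 2 / (∫ x, g x * f x ∂μ + ε * ∫ x, g x * f x ^ 2 ∂μ)
      ≤ ∫ x, g x * (f x / (1 + ε * f x)) ∂μ := by
  set A := ∫ x, g x * f x ∂μ
  set B := ∫ x, g x * f x ^ 2 ∂μ
  have hF : 0 ≤ ∫ x, g x * (f x / (1 + ε * f x)) ∂μ := integral_nonneg fun x =>
    mul_nonneg (hg x) (div_nonneg (hf x) (by nlinarith [mul_nonneg hε (hf x)]))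
  have hB : 0 ≤ B := integral_nonneg fun x => mul_nonneg (hg x) (sq_nonneg _)
  have hA : 0 ≤ A := integral_nonneg fun x => mul_nonneg (hg x) (hf x)
  rcases hA.eq_or_lt with hA | hA
  · rwa [← hA, sq, zero_mul, zero_div]
  -- integrate the tangent line of `u ↦ 1 / (1 + u)` at the `g f dμ`-mean `w` of `u = ε f`
  set w := ε * B / A
  have hw : 0 ≤ w := by positivity
  have hpt (x : α) : (1 + 2 * w) / (1 + w) ^ 2 * (g x * f x) - ε / (1 + w) ^ 2 * (g x * f x ^ 2)
      ≤ g x * (f x / (1 + ε * f x)) := by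
    have h := tangent_le_one_div_one_add (u := ε * f x) (w := w)
      (by nlinarith [mul_nonneg hε (hf x)]) (by linarith)
    have h' := mul_le_mul_of_nonneg_left h (mul_nonneg (hg x) (hf x))
    calc _ = g x * f x * ((1 + 2 * w - ε * f x) / (1 + w) ^ 2) := by ring
      _ ≤ g x * f x * (1 / (1 + ε * f x)) := h'
      _ = g x * (f x / (1 + ε * f x)) := by ring
  have hint :
      ∫ x, ((1 + 2 * w) / (1 + w) ^ 2 * (g x * f x) - ε / (1 + w) ^ 2 * (g x * f x ^ 2)) ∂μ
        ≤ ∫ x, g x * (f x / (1 + ε * f x)) ∂μ :=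
    integral_mono ((hgf.const_mul _).sub (hgf₂.const_mul _)) hgF hpt
  rw [integral_sub (hgf.const_mul _) (hgf₂.const_mul _), integral_const_mul,
    integral_const_mul] at hint
  calc A ^ 2 / (A + ε * B) = (1 + 2 * w) / (1 + w) ^ 2 * A - ε / (1 + w) ^ 2 * B := by
        simp only [w]
        field_simp
        ring
    _ ≤ _ := hint

end WeightedMoments

section FermiDirac

variable {ε a b : ℝ}

theorem Mw_nonneg (ha : 0 ≤ a) (v : E3) : 0 ≤ Mw a b v := mul_nonneg ha (exp_pos _).le

theorem Mw_sq (v : E3) : Mw a b v ^ 2 = Mw (a ^ 2) (2 * b) v := by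
  rw [Mw, Mw, mul_pow, ← exp_nat_mul]
  ring_nf

theorem FD_nonneg (hε : 0 ≤ ε) (ha : 0 ≤ a) (v : E3) : 0 ≤ FD ε a b v :=
  div_nonneg (Mw_nonneg ha v) (by nlinarith [Mw_nonneg (b := b) ha v])

theorem FD_le_Mw (hε : 0 ≤ ε) (ha : 0 ≤ a) (v : E3) : FD ε a b v ≤ Mw a b v :=
  div_le_self (Mw_nonneg ha v) (le_add_of_nonneg_right (mul_nonneg hε (Mw_nonneg ha v)))

theorem integrable_norm_pow_mul_Mw (hb : 0 < b) (k : ℕ) :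
    Integrable (fun v : E3 => ‖v‖ ^ k * Mw a b v) :=
  ((integrable_norm_pow_mul_exp_neg_mul_sq_norm volume hb k).const_mul a).congr
    (ae_of_all _ fun v => by simp only [Mw]; ring)

theorem integrable_norm_pow_mul_FD (hε : 0 ≤ ε) (ha : 0 ≤ a) (hb : 0 < b) (k : ℕ) :
    Integrable (fun v : E3 => ‖v‖ ^ k * FD ε a b v) := by
  refine (integrable_norm_pow_mul_Mw (a := a) hb k).mono' (by unfold FD Mw; fun_prop)
    (ae_of_all _ fun v => ?_)
  rw [norm_mul, norm_pow, norm_norm, Real.norm_of_nonneg (FD_nonneg hε ha v)]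
  exact mul_le_mul_of_nonneg_left (FD_le_Mw hε ha v) (by positivity)

theorem integral_Mw (hb : 0 < b) : ∫ v, Mw a b v = a * (π / b) ^ ((3 : ℝ) / 2) := by
  simp only [Mw]
  rw [integral_const_mul, GaussianFourier.integral_rexp_neg_mul_sq_norm hb]
  norm_num [finrank_euclideanSpace_fin]

theorem integral_norm_sq_mul_Mw (hb : 0 < b) :
    ∫ v, ‖v‖ ^ 2 * Mw a b v = 3 / (2 * b) * (a * (π / b) ^ ((3 : ℝ) / 2)) := by
  simp only [Mw, mul_left_comm (‖_‖ ^ 2)]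
  rw [integral_const_mul, integral_norm_sq_mul_exp_neg_mul_sq_norm volume hb,
    GaussianFourier.integral_rexp_neg_mul_sq_norm hb]
  norm_num [finrank_euclideanSpace_fin]
  ring

theorem rpow_pi_div_two_mul (hb : 0 < b) :
    (π / (2 * b)) ^ ((3 : ℝ) / 2) = (π / b) ^ ((3 : ℝ) / 2) / 2 ^ ((3 : ℝ) / 2) := by
  rw [show π / (2 * b) = π / b / 2 by ring, div_rpow (by positivity) zero_le_two]

theorem two_rpow_five_halves : (2 : ℝ) ^ ((5 : ℝ) / 2) = 2 * 2 ^ ((3 : ℝ) / 2) := by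
  rw [show (5 : ℝ) / 2 = 1 + 3 / 2 by norm_num, rpow_add two_pos, rpow_one]

theorem integral_FD_bounds (hε : 0 ≤ ε) (ha : 0 < a) (hb : 0 < b) :
    a * (π / b) ^ ((3 : ℝ) / 2) / (1 + ε * a / 2 ^ ((3 : ℝ) / 2)) ≤ ∫ v, FD ε a b v ∧
      ∫ v, FD ε a b v ≤ a * (π / b) ^ ((3 : ℝ) / 2) := by
  have hf := Mw_nonneg (b := b) ha.le
  have hg (v : E3) : (0 : ℝ) ≤ ‖v‖ ^ 0 := by positivity
  have hup := integral_mul_div_one_add_mul_le hε hf hg (integrable_norm_pow_mul_Mw hb 0)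
  have hlow := sq_integral_div_le_integral_mul_div_one_add hε hf hg
    (integrable_norm_pow_mul_Mw hb 0)
    (by simpa only [Mw_sq] using integrable_norm_pow_mul_Mw (by positivity) 0)
    (integrable_norm_pow_mul_FD hε ha.le hb 0)
  simp only [pow_zero, one_mul, Mw_sq] at hup hlow
  change ∫ v, FD ε a b v ≤ _ at hup
  change _ ≤ ∫ v, FD ε a b v at hlow
  rw [integral_Mw hb] at hup hlow
  rw [integral_Mw (by positivity), rpow_pi_div_two_mul hb] at hlow
  refine ⟨le_of_eq_of_le ?_ hlow, hup⟩
  have : 0 < (π / b) ^ ((3 : ℝ) / 2) := by positivity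
  field_simp

theorem integral_norm_sq_mul_FD_bounds (hε : 0 ≤ ε) (ha : 0 < a) (hb : 0 < b) :
    3 / (2 * b) * (a * (π / b) ^ ((3 : ℝ) / 2)) / (1 + ε * a / 2 ^ ((5 : ℝ) / 2))
        ≤ ∫ v, ‖v‖ ^ 2 * FD ε a b v ∧
      ∫ v, ‖v‖ ^ 2 * FD ε a b v ≤ 3 / (2 * b) * (a * (π / b) ^ ((3 : ℝ) / 2)) := by
  have hf := Mw_nonneg (b := b) ha.le
  have hg (v : E3) : (0 : ℝ) ≤ ‖v‖ ^ 2 := by positivity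
  have hup := integral_mul_div_one_add_mul_le hε hf hg (integrable_norm_pow_mul_Mw hb 2)
  have hlow := sq_integral_div_le_integral_mul_div_one_add hε hf hg
    (integrable_norm_pow_mul_Mw hb 2)
    (by simpa only [Mw_sq] using integrable_norm_pow_mul_Mw (by positivity) 2)
    (integrable_norm_pow_mul_FD hε ha.le hb 2)
  simp only [Mw_sq] at hup hlow
  change ∫ v, ‖v‖ ^ 2 * FD ε a b v ≤ _ at hup
  change _ ≤ ∫ v, ‖v‖ ^ 2 * FD ε a b v at hlow
  rw [integral_norm_sq_mul_Mw hb] at hup hlow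
  rw [integral_norm_sq_mul_Mw (by positivity), rpow_pi_div_two_mul hb] at hlow
  refine ⟨le_of_eq_of_le ?_ hlow, hup⟩
  have : 0 < (π / b) ^ ((3 : ℝ) / 2) := by positivity
  rw [two_rpow_five_halves]
  field_simp

theorem two_mul_mul_bounds_of_moment_bounds {A b c d ρ E : ℝ} (hA : 0 < A) (hb : 0 < b)
    (hc : 0 ≤ c) (hd : 0 ≤ d) (hρ₁ : A / (1 + c) ≤ ρ) (hρ₂ : ρ ≤ A)
    (hE₁ : 3 / (2 * b) * A / (1 + d) ≤ 3 * ρ * E) (hE₂ : 3 * ρ * E ≤ 3 / (2 * b) * A) :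
    0 < ρ ∧ 1 / (1 + d) ≤ 2 * b * E ∧ 2 * b * E ≤ 1 + c := by
  have hρ : 0 < ρ := (div_pos hA (by linarith)).trans_le hρ₁
  rw [div_le_iff₀ (by linarith)] at hρ₁
  rw [div_le_iff₀ (by linarith)] at hE₁
  rw [div_mul_eq_mul_div, le_div_iff₀ (by positivity)] at hE₂
  rw [div_mul_eq_mul_div, div_le_iff₀ (by positivity)] at hE₁
  refine ⟨hρ, ?_, ?_⟩
  · rw [div_le_iff₀ (by linarith)]
    nlinarith
  · nlinarith

theorem FD_parameter_bounds (hε : 0 ≤ ε) (ha : 0 < a) (hb : 0 < b) {ρ E : ℝ}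
    (hmass : ∫ v, FD ε a b v = ρ) (henergy : ∫ v, ‖v‖ ^ 2 * FD ε a b v = 3 * ρ * E) :
    (b / (1 + ε * a / 2 ^ ((3 : ℝ) / 2)) ≤ 1 / (2 * E) ∧
        1 / (2 * E) ≤ b * (1 + ε * a / 2 ^ ((5 : ℝ) / 2))) ∧
      (a / (1 + ε * a / 2 ^ ((3 : ℝ) / 2)) ^ ((5 : ℝ) / 2) ≤ ρ / (2 * π * E) ^ ((3 : ℝ) / 2) ∧
        ρ / (2 * π * E) ^ ((3 : ℝ) / 2) ≤ a * (1 + ε * a / 2 ^ ((5 : ℝ) / 2)) ^ ((3 : ℝ) / 2)) := by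
  obtain ⟨hρ₁, hρ₂⟩ := integral_FD_bounds hε ha hb
  obtain ⟨hE₁, hE₂⟩ := integral_norm_sq_mul_FD_bounds hε ha hb
  rw [hmass] at hρ₁ hρ₂
  rw [henergy] at hE₁ hE₂
  set T := (π / b) ^ ((3 : ℝ) / 2)
  set c := ε * a / 2 ^ ((3 : ℝ) / 2)
  set d := ε * a / 2 ^ ((5 : ℝ) / 2)
  have hT : 0 < T := by positivity
  have hc : 0 ≤ c := by positivity
  have hd : 0 ≤ d := by positivity
  obtain ⟨hρ, hx₁, hx₂⟩ :=
    two_mul_mul_bounds_of_moment_bounds (by positivity) hb hc hd hρ₁ hρ₂ hE₁ hE₂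
  have hx : 0 < 2 * b * E := (by positivity : (0 : ℝ) < 1 / (1 + d)).trans_le hx₁
  have hE : 0 < E := by nlinarith
  have h2πE : (2 * π * E) ^ ((3 : ℝ) / 2) = T * (2 * b * E) ^ ((3 : ℝ) / 2) := by
    rw [← mul_rpow (by positivity) hx.le]
    congr 1
    field_simp
  refine ⟨⟨?_, ?_⟩, ?_, ?_⟩
  · rw [div_le_div_iff₀ (by positivity) (by positivity)]
    linarith
  · rw [div_le_iff₀ (by positivity)]
    rw [div_le_iff₀ (by positivity)] at hx₁
    linarith
  · rw [h2πE]
    calc a / (1 + c) ^ ((5 : ℝ) / 2) = a * T / (1 + c) / (T * (1 + c) ^ ((3 : ℝ) / 2)) := by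
          rw [show (5 : ℝ) / 2 = 1 + 3 / 2 by norm_num, rpow_add (by positivity), rpow_one]
          field_simp
      _ ≤ ρ / (T * (2 * b * E) ^ ((3 : ℝ) / 2)) := by gcongr
  · rw [h2πE]
    calc ρ / (T * (2 * b * E) ^ ((3 : ℝ) / 2)) ≤ a * T / (T * (1 / (1 + d)) ^ ((3 : ℝ) / 2)) := by
          gcongr
      _ = a * (1 + d) ^ ((3 : ℝ) / 2) := by
          rw [one_div, inv_rpow (by positivity)]
          field_simp

end FermiDirac

theorem stmt16_general (ε a b ρ E : ℝ) (hε : 0 < ε) (ha : 0 < a) (hb : 0 < b)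
    (hmass : (∫ v, FD ε a b v) = ρ)
    (henergy : (∫ v, ‖v‖ ^ 2 * FD ε a b v) = 3 * ρ * E)
    (hεa : ε * a ≤ 2 ^ ((5 : ℝ) / 2) / 3) :
    (3 * b / 5 ≤ 1 / (2 * E) ∧ 1 / (2 * E) ≤ 4 * b / 3) ∧
    ((3 / 5 : ℝ) ^ ((5 : ℝ) / 2) * a ≤ ρ / (2 * π * E) ^ ((3 : ℝ) / 2) ∧
      ρ / (2 * π * E) ^ ((3 : ℝ) / 2) ≤ (4 / 3 : ℝ) ^ ((3 : ℝ) / 2) * a) := by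
  have hc : 1 + ε * a / 2 ^ ((3 : ℝ) / 2) ≤ 5 / 3 := by
    rw [two_rpow_five_halves] at hεa
    have : ε * a / 2 ^ ((3 : ℝ) / 2) ≤ 2 / 3 := by
      rw [div_le_iff₀ (by positivity)]; linarith
    linarith
  have hd : 1 + ε * a / 2 ^ ((5 : ℝ) / 2) ≤ 4 / 3 := by
    have : ε * a / 2 ^ ((5 : ℝ) / 2) ≤ 1 / 3 := by
      rw [div_le_iff₀ (by positivity)]; linarith
    linarith
  obtain ⟨⟨h₁, h₂⟩, h₃, h₄⟩ := FD_parameter_bounds hε.le ha hb hmass henergy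
  refine ⟨⟨?_, ?_⟩, ?_, ?_⟩
  · calc 3 * b / 5 = b / (5 / 3) := by ring
      _ ≤ _ := by gcongr
      _ ≤ _ := h₁
  · calc _ ≤ _ := h₂
      _ ≤ b * (4 / 3) := by gcongr
      _ = 4 * b / 3 := by ring
  · calc (3 / 5 : ℝ) ^ ((5 : ℝ) / 2) * a = a / (5 / 3) ^ ((5 : ℝ) / 2) := by
          rw [show (3 / 5 : ℝ) = (5 / 3)⁻¹ by norm_num, inv_rpow (by norm_num)]
          ring
      _ ≤ _ := by gcongr
      _ ≤ _ := h₃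
  · calc _ ≤ _ := h₄
      _ ≤ a * (4 / 3) ^ ((3 : ℝ) / 2) := by gcongr
      _ = _ := mul_comm _ _

/-- Under the smallness condition `εa ≤ 2^{5/2}/3`, the parameters of the
Fermi–Dirac statistics with mass `ρ` and energy `3ρE` satisfy
`3b/5 ≤ 1/(2E) ≤ 4b/3` and `(3/5)^{5/2} a ≤ ρ/(2πE)^{3/2} ≤ (4/3)^{3/2} a`. -/
theorem stmt16 (ε a b ρ E : ℝ) (hε : 0 < ε) (ha : 0 < a) (hb : 0 < b)
    (hρ : 0 < ρ) (hE : 0 < E)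
    (hmass : (∫ v, FD ε a b v) = ρ)
    (henergy : (∫ v, ‖v‖ ^ 2 * FD ε a b v) = 3 * ρ * E)
    (hεa : ε * a ≤ 2 ^ ((5 : ℝ) / 2) / 3) :
    (3 * b / 5 ≤ 1 / (2 * E) ∧ 1 / (2 * E) ≤ 4 * b / 3) ∧
    ((3 / 5 : ℝ) ^ ((5 : ℝ) / 2) * a ≤ ρ / (2 * π * E) ^ ((3 : ℝ) / 2) ∧
      ρ / (2 * π * E) ^ ((3 : ℝ) / 2) ≤ (4 / 3 : ℝ) ^ ((3 : ℝ) / 2) * a) :=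
  stmt16_general ε a b ρ E hε ha hb hmass henergy hεa

end
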